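/- Let V_1, …, V_r be disjoint finite sets with |V_i| = a_i ≥ 2, and let X_i = Δ(V_1) * ⋯ * Δ(V_{i−1}) * ∂Δ(V_i) * Δ(V_{i+1}) * ⋯ * Δ(V_r), a simplicial complex on V = V_1 ∪ ⋯ ∪ V_r. Then: L_K(X_i) = a_i − 1 for each i; the intersection ∩_{i=1}^r X_i equals the join ∂Δ(V_1) * ⋯ * ∂Δ(V_r), and L_K(∩_{i=1}^r X_i) = Σ_{i=1}^r a_i − r; the union ∪_{i=1}^r X_i equals ∂Δ(V), and L_K(∪_{i=1}^r X_i) = Σ_{i=1}^r a_i − 1. In particular, equality is attained in both inequalities L_K(∩ X_i) ≤ Σ L_K(X_i) and L_K(∪ X_i) ≤ Σ L_K(X_i) + r − 1. -/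

import Mathlib

/-!
Chains of the full simplex on `V` are modelled as arbitrary functions `Finset V → K`. On them
the boundary is the sum of the partial boundaries `∂_B` that delete a vertex of a block `B`;
these square to zero, hence anticommute for disjoint blocks. The chains of a complex `X` embed
by extension by zero, compatibly with the boundary.

Two facts then give every Leray number. A cone is acyclic, since coning off from the apex is a
contracting homotopy that preserves the chains of the cone. A join `∂Δ(B₁) * ⋯ * ∂Δ(Bₘ)` has
nonzero top homology: `∂_{B₁} ⋯ ∂_{Bₘ} [B₁ ∪ ⋯ ∪ Bₘ]` is a nonzero chain on its top faces,
and it is a cycle because each `∂_{Bᵢ}` can be moved next to itself.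

Both `X_i` and `∂Δ(V)` are of the form `Δ(V ∖ A) * ∂Δ(A)`: an induced subcomplex either has a
vertex outside `A`, and is a cone over it, or lies in `∂Δ(A)`, whose top homology is attained
at `S = A`. The intersection is `∂Δ(V₁) * ⋯ * ∂Δ(V_r)`, of dimension `∑ aᵢ - r - 1`.
-/

open Finset

/-- A finite abstract simplicial complex on the vertex type `V` (possibly void;
any non-void complex contains the empty face `∅` by downward closure). -/
structure SComplex (V : Type) [DecidableEq V] where
  faces : Finset (Finset V)
  down_closed : ∀ ⦃σ : Finset V⦄, σ ∈ faces → ∀ ⦃τ : Finset V⦄, τ ⊆ σ → τ ∈ faces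

namespace SComplex

variable {V : Type} [DecidableEq V]

/-- Intersection of two simplicial complexes on the same vertex set. -/
def inter (X Y : SComplex V) : SComplex V where
  faces := X.faces ∩ Y.faces
  down_closed := fun σ hσ τ hτ => by
    rw [Finset.mem_inter] at hσ ⊢
    exact ⟨X.down_closed hσ.1 hτ, Y.down_closed hσ.2 hτ⟩

/-- Union of two simplicial complexes on the same vertex set. -/
def union (X Y : SComplex V) : SComplex V where
  faces := X.faces ∪ Y.faces
  down_closed := fun σ hσ τ hτ => by
    rw [Finset.mem_union] at hσ ⊢
    exact hσ.elim (fun h => Or.inl (X.down_closed h hτ)) (fun h => Or.inr (Y.down_closed h hτ))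

/-- The induced subcomplex `X[S] = {σ ∈ X : σ ⊆ S}`. -/
def induced (X : SComplex V) (S : Finset V) : SComplex V where
  faces := X.faces.filter (fun σ => σ ⊆ S)
  down_closed := fun σ hσ τ hτ => by
    rw [Finset.mem_filter] at hσ ⊢
    exact ⟨X.down_closed hσ.1 hτ, hτ.trans hσ.2⟩

/-- The link `lk(X,A) = {τ ∈ X : τ ∩ A = ∅, τ ∪ A ∈ X}`; it is the void
complex when `A ∉ X`. -/
def link (X : SComplex V) (A : Finset V) : SComplex V where
  faces := X.faces.filter (fun τ => τ ∩ A = ∅ ∧ τ ∪ A ∈ X.faces)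
  down_closed := fun σ hσ τ hτ => by
    rw [Finset.mem_filter] at hσ ⊢
    refine ⟨X.down_closed hσ.1 hτ, Finset.subset_empty.1 ?_,
      X.down_closed hσ.2.2 (Finset.union_subset_union hτ (Finset.Subset.refl A))⟩
    rw [← hσ.2.1]
    exact Finset.inter_subset_inter hτ (Finset.Subset.refl A)

/-- The full simplex `Δ(A)` on a vertex set `A`. -/
def simplexOn (A : Finset V) : SComplex V where
  faces := A.powerset
  down_closed := fun σ hσ τ hτ =>
    Finset.mem_powerset.2 (hτ.trans (Finset.mem_powerset.1 hσ))

/-- The boundary `∂Δ(A)` of the simplex on `A` (all proper subsets of `A`). -/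
def bdSimplex (A : Finset V) : SComplex V where
  faces := A.powerset.erase A
  down_closed := fun σ hσ τ hτ => by
    rw [Finset.mem_erase, Finset.mem_powerset] at hσ ⊢
    refine ⟨fun hτA => hσ.1 ?_, hτ.trans hσ.2⟩
    subst hτA
    exact Finset.Subset.antisymm hσ.2 hτ

variable [Fintype V]

/-- Intersection of a finite family of complexes on the same vertex set. -/
def interFam {r : ℕ} (X : Fin r → SComplex V) : SComplex V where
  faces := Finset.univ.filter (fun σ => ∀ i, σ ∈ (X i).faces)
  down_closed := fun σ hσ τ hτ => by
    rw [Finset.mem_filter] at hσ ⊢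
    exact ⟨Finset.mem_univ τ, fun i => (X i).down_closed (hσ.2 i) hτ⟩

/-- Union of a finite family of complexes on the same vertex set. -/
def unionFam {r : ℕ} (X : Fin r → SComplex V) : SComplex V where
  faces := Finset.univ.filter (fun σ => ∃ i, σ ∈ (X i).faces)
  down_closed := fun σ hσ τ hτ => by
    rw [Finset.mem_filter] at hσ ⊢
    obtain ⟨-, i, hi⟩ := hσ
    exact ⟨Finset.mem_univ τ, i, (X i).down_closed hi hτ⟩

/-- The join of a family of complexes `Z i`, the `i`-th one having its vertices
inside the block `Vs i` of a partition of the vertex set: the faces are the sets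
whose trace on each block is a face of the corresponding complex. -/
def joinFam {r : ℕ} (Vs : Fin r → Finset V) (Z : Fin r → SComplex V) : SComplex V where
  faces := Finset.univ.filter (fun σ => ∀ i, σ ∩ Vs i ∈ (Z i).faces)
  down_closed := fun σ hσ τ hτ => by
    rw [Finset.mem_filter] at hσ ⊢
    exact ⟨Finset.mem_univ τ, fun i =>
      (Z i).down_closed (hσ.2 i) (Finset.inter_subset_inter hτ (Finset.Subset.refl _))⟩

/-- The Alexander dual `X* = {τ : [n] - τ ∉ X}`. -/
def dual (X : SComplex V) : SComplex V where
  faces := Finset.univ.filter (fun τ => τᶜ ∉ X.faces)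
  down_closed := fun σ hσ τ hτ => by
    rw [Finset.mem_filter] at hσ ⊢
    exact ⟨Finset.mem_univ τ, fun hc => hσ.2 (X.down_closed hc (Finset.compl_subset_compl.2 hτ))⟩

/-- The set of faces of `X` of cardinality `k` (i.e. of dimension `k - 1`). -/
def cells (X : SComplex V) (k : ℕ) : Finset (Finset V) :=
  X.faces.filter (fun σ => σ.card = k)

/-- The space of simplicial `(k-1)`-dimensional chains of `X` with coefficients
in `K`: chains are indexed by cardinality, so degree `k` chains are spanned by
the faces of cardinality `k`.  (In particular degree `0` chains are spanned by
the empty face, giving the augmented chain complex computing reduced homology.) -/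
abbrev Chains (K : Type) [Field K] (X : SComplex V) (k : ℕ) : Type := ↥(X.cells k) → K

/-- The simplicial boundary map from degree `k+1` chains (on faces of
cardinality `k+1`) to degree `k` chains.  Signs are computed with respect to a
fixed enumeration of the vertices. -/
noncomputable def boundary (K : Type) [Field K] (X : SComplex V) (k : ℕ) :
    Chains K X (k+1) →ₗ[K] Chains K X k :=
  LinearMap.pi fun τ =>
    ∑ σ : ↥(X.cells (k+1)),
      (∑ v ∈ (σ : Finset V),
        if (σ : Finset V).erase v = (τ : Finset V) then
          ((-1 : K) ^ (((σ : Finset V)).filter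
            (fun w => Fintype.equivFin V w < Fintype.equivFin V v)).card)
        else 0) • LinearMap.proj σ

/-- Cycles of the (augmented) simplicial chain complex in degree `k`
(corresponding to homological dimension `k - 1`). -/
noncomputable def cyclesSub (K : Type) [Field K] (X : SComplex V) :
    (k : ℕ) → Submodule K (Chains K X k)
  | 0 => ⊤
  | (m+1) => LinearMap.ker (boundary K X m)

/-- The reduced simplicial homology `H̃_{k-1}(X; K)` (cardinality-indexed: the
argument `k` corresponds to homological dimension `k - 1`). -/
noncomputable abbrev RedHomology (K : Type) [Field K] (X : SComplex V) (k : ℕ) : Type :=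
  ↥(cyclesSub K X k) ⧸ Submodule.comap (cyclesSub K X k).subtype
      (LinearMap.range (boundary K X k))

/-- `h̃_{k-1}(X) = dim_K H̃_{k-1}(X; K)` (cardinality-indexed, as in
`RedHomology`). -/
noncomputable def redHomDim (K : Type) [Field K] (X : SComplex V) (k : ℕ) : ℕ :=
  Module.finrank K (RedHomology K X k)

/-- `dim_K H̃_k(X; K)` for an arbitrary integer `k`; it is zero for `k ≤ -2`.
Here the argument is the genuine homological dimension `k`. -/
noncomputable def redHomDimZ (K : Type) [Field K] (X : SComplex V) (k : ℤ) : ℕ :=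
  if 0 ≤ k + 1 then redHomDim K X (k + 1).toNat else 0

/-- Chains supported on the faces of a subcomplex `A`, inside the chains of `X`. -/
noncomputable def subChains (K : Type) [Field K] (X A : SComplex V) (k : ℕ) :
    Submodule K (Chains K X k) :=
  ⨅ (σ : ↥(X.cells k)) (_ : (σ : Finset V) ∉ A.faces), LinearMap.ker (LinearMap.proj σ)

/-- Relative cycles in homological dimension `i` for the pair `(X, A)`. -/
noncomputable def relCycles (K : Type) [Field K] (X A : SComplex V) (i : ℕ) :
    Submodule K (Chains K X (i+1)) :=
  Submodule.comap (boundary K X i) (subChains K X A i)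

/-- The relative simplicial homology `H_i(X, A; K)` of the pair `(X, A)`. -/
noncomputable abbrev RelHomology (K : Type) [Field K] (X A : SComplex V) (i : ℕ) : Type :=
  ↥(relCycles K X A i) ⧸ Submodule.comap (relCycles K X A i).subtype
      (subChains K X A (i+1) ⊔ LinearMap.range (boundary K X (i+1)))

/-- `dim_K H_i(X, A; K)`. -/
noncomputable def relHomDim (K : Type) [Field K] (X A : SComplex V) (i : ℕ) : ℕ :=
  Module.finrank K (RelHomology K X A i)

/-- `X` is `d`-Leray over `K`: every induced subcomplex has vanishing reduced
homology in dimensions `≥ d`. -/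
def IsLeray (K : Type) [Field K] (d : ℕ) (X : SComplex V) : Prop :=
  ∀ S : Finset V, ∀ i : ℕ, d ≤ i → redHomDim K (X.induced S) (i + 1) = 0

/-- The Leray number `L_K(X)`: the minimal `d` such that `X` is `d`-Leray over `K`. -/
noncomputable def lerayNum (K : Type) [Field K] (X : SComplex V) : ℕ :=
  sInf {d | IsLeray K d X}

end SComplex

namespace SComplex

section

variable {V : Type} [DecidableEq V]

@[ext]
lemma ext {X Y : SComplex V} (h : X.faces = Y.faces) : X = Y := by
  cases X; cases Y; simpa using h

lemma mem_cells {X : SComplex V} {k : ℕ} {σ : Finset V} :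
    σ ∈ X.cells k ↔ σ ∈ X.faces ∧ σ.card = k := mem_filter

lemma mem_induced {X : SComplex V} {S σ : Finset V} :
    σ ∈ (X.induced S).faces ↔ σ ∈ X.faces ∧ σ ⊆ S := mem_filter

lemma mem_bdSimplex {A σ : Finset V} : σ ∈ (bdSimplex A).faces ↔ σ ⊆ A ∧ σ ≠ A := by
  simp [bdSimplex, and_comm]

lemma inter_mem_bdSimplex {A σ : Finset V} : σ ∩ A ∈ (bdSimplex A).faces ↔ ¬ A ⊆ σ := by
  simp [mem_bdSimplex, inter_eq_right]

lemma inter_mem_simplexOn (A σ : Finset V) : σ ∩ A ∈ (simplexOn A).faces :=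
  mem_powerset.2 inter_subset_right

lemma mem_foldr_union {L : List (Finset V)} {v : V} :
    v ∈ L.foldr (· ∪ ·) ∅ ↔ ∃ B ∈ L, v ∈ B := by
  induction L with
  | nil => simp
  | cons C L ih => simp [ih]

lemma isEmpty_cells_of_card_lt {X : SComplex V} {k : ℕ} (h : ∀ σ ∈ X.faces, σ.card < k) :
    IsEmpty (X.cells k) :=
  ⟨fun σ => (h σ.1 (mem_cells.1 σ.2).1).ne (mem_cells.1 σ.2).2⟩

variable (K : Type) [Field K]

noncomputable def extendChain (X : SComplex V) (k : ℕ) (c : Chains K X k) : Finset V → K :=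
  fun σ => if h : σ ∈ X.cells k then c ⟨σ, h⟩ else 0

variable {K}

lemma mem_cells_of_extendChain_ne_zero {X : SComplex V} {k : ℕ} {c : Chains K X k} {σ : Finset V}
    (h : extendChain K X k c σ ≠ 0) : σ ∈ X.cells k := by
  by_contra hσ
  exact h (dif_neg hσ)

lemma extendChain_injective (X : SComplex V) (k : ℕ) : Function.Injective (extendChain K X k) :=
  fun c d h => funext fun σ => by simpa [extendChain, σ.2] using congrFun h σ

lemma extendChain_zero (X : SComplex V) (k : ℕ) : extendChain K X k 0 = 0 := by
  funext σ; simp [extendChain]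

lemma exists_extendChain_eq {X : SComplex V} {k : ℕ} {f : Finset V → K}
    (hf : ∀ σ, f σ ≠ 0 → σ ∈ X.cells k) : ∃ c, extendChain K X k c = f := by
  refine ⟨fun σ => f σ, funext fun σ => ?_⟩
  by_cases hσ : σ ∈ X.cells k
  · simp [extendChain, hσ]
  · simp only [extendChain, dif_neg hσ]
    by_contra h
    exact hσ (hf σ (Ne.symm h))

end

section

variable {V : Type} [Fintype V] (K : Type) [Field K]

noncomputable def sgn (σ : Finset V) (v : V) : K :=
  (-1 : K) ^ (σ.filter (fun w => Fintype.equivFin V w < Fintype.equivFin V v)).card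

lemma sgn_mul_self (σ : Finset V) (v : V) : sgn K σ v * sgn K σ v = 1 := by
  rw [sgn, ← pow_add, ← two_mul, pow_mul, neg_one_sq, one_pow]

lemma sgn_ne_zero (σ : Finset V) (v : V) : sgn K σ v ≠ 0 :=
  left_ne_zero_of_mul_eq_one (sgn_mul_self K σ v)

end

variable {V : Type} [DecidableEq V] [Fintype V]

lemma mem_joinFam {r : ℕ} {Vs : Fin r → Finset V} {Z : Fin r → SComplex V} {σ : Finset V} :
    σ ∈ (joinFam Vs Z).faces ↔ ∀ i, σ ∩ Vs i ∈ (Z i).faces := by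
  simp [joinFam]

lemma mem_interFam {r : ℕ} {X : Fin r → SComplex V} {σ : Finset V} :
    σ ∈ (interFam X).faces ↔ ∀ i, σ ∈ (X i).faces := by
  simp [interFam]

lemma mem_unionFam {r : ℕ} {X : Fin r → SComplex V} {σ : Finset V} :
    σ ∈ (unionFam X).faces ↔ ∃ i, σ ∈ (X i).faces := by
  simp [unionFam]

lemma mem_joinFam_ite_bdSimplex {r : ℕ} {Vs : Fin r → Finset V} (i : Fin r) {σ : Finset V} :
    σ ∈ (joinFam Vs fun j => if j = i then bdSimplex (Vs j) else simplexOn (Vs j)).faces ↔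
      ¬ Vs i ⊆ σ := by
  rw [mem_joinFam]
  refine ⟨fun h => by simpa [inter_mem_bdSimplex] using h i, fun h j => ?_⟩
  split_ifs with hj
  · exact inter_mem_bdSimplex.2 (hj ▸ h)
  · exact inter_mem_simplexOn _ _

lemma card_eq_sum_card_inter {r : ℕ} {Vs : Fin r → Finset V}
    (hdisj : ∀ i j, i ≠ j → Disjoint (Vs i) (Vs j))
    (hcover : univ.biUnion Vs = univ) (σ : Finset V) :
    σ.card = ∑ i, (σ ∩ Vs i).card := by
  conv_lhs => rw [← inter_univ σ, ← hcover, inter_biUnion]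
  exact card_biUnion fun i _ j _ hij =>
    (hdisj i j hij).mono inter_subset_right inter_subset_right

variable (K : Type) [Field K]

lemma sgn_insert {σ : Finset V} {u : V} (hu : u ∉ σ) (v : V) :
    sgn K (insert u σ) v =
      (if Fintype.equivFin V u < Fintype.equivFin V v then -1 else 1) * sgn K σ v := by
  rw [sgn, sgn, filter_insert]
  split_ifs with h
  · rw [card_insert_of_notMem (by simp [hu]), pow_succ, mul_comm]
  · rw [one_mul]

lemma sgn_insert_insert_anticomm {τ : Finset V} {u v : V} (hu : u ∉ τ) (hv : v ∉ τ)
    (huv : u ≠ v) :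
    sgn K (insert u τ) u * sgn K (insert u (insert v τ)) v
      + sgn K (insert v τ) v * sgn K (insert u (insert v τ)) u = 0 := by
  have hvu : v ∉ insert u τ := by simp [hv, huv.symm]
  rw [insert_comm u v τ]
  simp only [sgn_insert K hvu, sgn_insert K hu, sgn_insert K hv, lt_irrefl, if_false, one_mul]
  have hne : Fintype.equivFin V u ≠ Fintype.equivFin V v := (Fintype.equivFin V).injective.ne huv
  rcases hne.lt_or_gt with h | h
  · simp [h, h.not_gt]; ring
  · simp [h, h.not_gt]; ring

lemma sgn_insert_insert_cone {τ : Finset V} {u v : V} (hu : u ∉ τ) (hv : v ∉ τ)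
    (huv : u ≠ v) :
    sgn K (insert u (insert v τ)) u * sgn K (insert u (insert v τ)) v
      + sgn K (insert v τ) v * sgn K (insert u τ) u = 0 := by
  have huv' : u ∉ insert v τ := by simp [hu, huv]
  simp only [sgn_insert K huv', sgn_insert K hu, sgn_insert K hv, lt_irrefl, if_false, one_mul]
  have hne : Fintype.equivFin V u ≠ Fintype.equivFin V v := (Fintype.equivFin V).injective.ne huv
  rcases hne.lt_or_gt with h | h
  · simp [h, h.not_gt]; ring
  · simp [h, h.not_gt]; ring

noncomputable def partialBoundary (B : Finset V) : (Finset V → K) →ₗ[K] (Finset V → K) where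
  toFun c τ := ∑ u ∈ B \ τ, sgn K (insert u τ) u * c (insert u τ)
  map_add' c d := by ext τ; simp [mul_add, sum_add_distrib]
  map_smul' a c := by ext τ; simp [mul_sum, mul_left_comm]

lemma partialBoundary_apply (B : Finset V) (c : Finset V → K) (τ : Finset V) :
    partialBoundary K B c τ = ∑ u ∈ B \ τ, sgn K (insert u τ) u * c (insert u τ) := rfl

lemma exists_of_partialBoundary_apply_ne_zero {B : Finset V} {c : Finset V → K} {τ : Finset V}
    (h : partialBoundary K B c τ ≠ 0) : ∃ u ∈ B, u ∉ τ ∧ c (insert u τ) ≠ 0 := by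
  obtain ⟨u, hu, hne⟩ := exists_ne_zero_of_sum_ne_zero h
  exact ⟨u, (mem_sdiff.1 hu).1, (mem_sdiff.1 hu).2, right_ne_zero_of_mul hne⟩

lemma partialBoundary_union {B C : Finset V} (h : Disjoint B C) :
    partialBoundary K (B ∪ C) = partialBoundary K B + partialBoundary K C := by
  refine LinearMap.ext fun c => funext fun τ => ?_
  simp only [LinearMap.add_apply, Pi.add_apply, partialBoundary_apply, union_sdiff_distrib]
  exact sum_union (h.mono sdiff_subset sdiff_subset)

lemma partialBoundary_comp_self (B : Finset V) :
    partialBoundary K B ∘ₗ partialBoundary K B = 0 := by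
  refine LinearMap.ext fun c => funext fun τ => ?_
  simp only [LinearMap.comp_apply, partialBoundary_apply, mul_sum, sdiff_insert,
    LinearMap.zero_apply, Pi.zero_apply]
  rw [← sum_finset_product' (B \ τ).offDiag _ _ (fun p => by simp [and_comm, ne_comm])]
  refine sum_involution (fun p _ => p.swap) (fun p hp => ?_) (fun p hp _ h => ?_)
    (fun p hp => ?_) (fun p _ => rfl) <;> obtain ⟨hu, hv, huv⟩ := mem_offDiag.1 hp
  · rw [Prod.fst_swap, Prod.snd_swap, insert_comm p.2, ← mul_assoc, ← mul_assoc,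
      ← add_mul, sgn_insert_insert_anticomm K (mem_sdiff.1 hu).2 (mem_sdiff.1 hv).2 huv,
      zero_mul]
  · exact huv (congrArg Prod.snd h)
  · exact mem_offDiag.2 ⟨hv, hu, huv.symm⟩

lemma partialBoundary_comp_anticomm {B C : Finset V} (h : Disjoint B C) :
    partialBoundary K B ∘ₗ partialBoundary K C
      = -(partialBoundary K C ∘ₗ partialBoundary K B) := by
  have h0 := partialBoundary_comp_self K (B ∪ C)
  rw [partialBoundary_union K h, LinearMap.add_comp, LinearMap.comp_add, LinearMap.comp_add,
    partialBoundary_comp_self, partialBoundary_comp_self, zero_add, add_zero] at h0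
  exact eq_neg_of_add_eq_zero_left h0

lemma partialBoundary_univ_of_support {ρ : Finset V} {c : Finset V → K}
    (hc : ∀ σ, c σ ≠ 0 → σ ⊆ ρ) :
    partialBoundary K univ c = partialBoundary K ρ c := by
  funext τ
  refine (sum_subset (sdiff_subset_sdiff (subset_univ ρ) le_rfl)
    fun u _ hu => ?_).symm
  have huρ : u ∉ ρ := fun h => hu (by simp_all)
  by_contra hne
  exact huρ (hc _ (right_ne_zero_of_mul hne) (mem_insert_self u τ))

lemma partialBoundary_univ_apply_eq_sum (f : Finset V → K) (τ : Finset V) :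
    partialBoundary K univ f τ =
      ∑ σ, ∑ v ∈ σ, if σ.erase v = τ then sgn K σ v * f σ else 0 := by
  simp_rw [← sum_filter]
  rw [sum_comm' (t' := univ \ τ) (s' := fun v => {insert v τ})]
  · simp [partialBoundary_apply]
  · intro σ v
    constructor
    · rintro ⟨-, hv⟩
      obtain ⟨hvσ, rfl⟩ := mem_filter.1 hv
      simp [insert_erase hvσ]
    · rintro ⟨hσ, hv⟩
      rw [mem_singleton.1 hσ]
      have hvτ : v ∉ τ := (mem_sdiff.1 hv).2
      simp [erase_insert hvτ]

noncomputable def coneOp (v : V) : (Finset V → K) →ₗ[K] (Finset V → K) where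
  toFun c σ := if v ∈ σ then sgn K σ v * c (σ.erase v) else 0
  map_add' c d := by funext σ; simp only [Pi.add_apply]; split_ifs <;> ring
  map_smul' a c := by
    funext σ; simp only [Pi.smul_apply, smul_eq_mul, RingHom.id_apply]; split_ifs <;> ring

lemma coneOp_apply (v : V) (c : Finset V → K) (σ : Finset V) :
    coneOp K v c σ = if v ∈ σ then sgn K σ v * c (σ.erase v) else 0 := rfl

lemma partialBoundary_coneOp_add (v : V) (c : Finset V → K) :
    partialBoundary K univ (coneOp K v c) + coneOp K v (partialBoundary K univ c)
      = c := by
  funext σ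
  simp only [Pi.add_apply, partialBoundary_apply, coneOp_apply]
  by_cases hv : v ∈ σ
  · obtain ⟨τ, hvτ, rfl⟩ : ∃ τ, v ∉ τ ∧ σ = insert v τ :=
      ⟨σ.erase v, notMem_erase v σ, (insert_erase hv).symm⟩
    have hsplit : univ \ τ = insert v (univ \ insert v τ) := by
      ext u; by_cases u = v <;> simp_all
    rw [if_pos hv, erase_insert hvτ, hsplit, sum_insert (by simp), mul_add,
      ← mul_assoc, sgn_mul_self, one_mul, ← add_assoc, add_right_comm, mul_sum,
      ← sum_add_distrib, sum_eq_zero, zero_add]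
    intro u hu
    have huτ : u ∉ insert v τ := (mem_sdiff.1 hu).2
    have huv : u ≠ v := fun h => huτ (h ▸ mem_insert_self v τ)
    rw [if_pos (mem_insert_of_mem (mem_insert_self v τ)), erase_insert_of_ne huv,
      erase_insert hvτ, ← mul_assoc, ← mul_assoc, ← add_mul]
    rw [sgn_insert_insert_cone K (fun h => huτ (mem_insert_of_mem h)) hvτ huv, zero_mul]
  · rw [if_neg hv, add_zero]
    rw [sum_eq_single_of_mem v (by simp [hv]), if_pos (mem_insert_self v σ),
      erase_insert hv, ← mul_assoc, sgn_mul_self, one_mul]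
    intro u _ huv
    rw [if_neg (by simp [hv, huv.symm]), mul_zero]

noncomputable def iterBoundary : List (Finset V) → (Finset V → K) →ₗ[K] (Finset V → K)
  | [] => LinearMap.id
  | B :: L => partialBoundary K B ∘ₗ iterBoundary L

lemma partialBoundary_comp_iterBoundary {L : List (Finset V)} (hL : L.Pairwise Disjoint)
    {B : Finset V} (hB : B ∈ L) : partialBoundary K B ∘ₗ iterBoundary K L = 0 := by
  induction L with
  | nil => simp at hB
  | cons C L ih =>
    rw [List.pairwise_cons] at hL
    rw [iterBoundary, ← LinearMap.comp_assoc]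
    rcases List.mem_cons.1 hB with rfl | hB
    · rw [partialBoundary_comp_self, LinearMap.zero_comp]
    · rw [partialBoundary_comp_anticomm K (hL.1 B hB).symm, LinearMap.neg_comp,
        LinearMap.comp_assoc, ih hL.2 hB, LinearMap.comp_zero, neg_zero]

lemma partialBoundary_foldr_union_eq_zero {L : List (Finset V)} (hL : L.Pairwise Disjoint)
    {c : Finset V → K} (hc : ∀ B ∈ L, partialBoundary K B c = 0) :
    partialBoundary K (L.foldr (· ∪ ·) ∅) c = 0 := by
  induction L with
  | nil => funext τ; simp [partialBoundary_apply]
  | cons C L ih =>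
    rw [List.pairwise_cons] at hL
    have hdisj : Disjoint C (L.foldr (· ∪ ·) ∅) := disjoint_left.2 fun v hvC hv => by
      obtain ⟨B, hB, hvB⟩ := mem_foldr_union.1 hv
      exact disjoint_left.1 (hL.1 B hB) hvC hvB
    rw [List.foldr_cons, partialBoundary_union K hdisj, LinearMap.add_apply,
      hc C List.mem_cons_self, ih hL.2 fun B hB => hc B (List.mem_cons_of_mem C hB), add_zero]

lemma iterBoundary_single_support {L : List (Finset V)} {ρ σ : Finset V}
    (h : iterBoundary K L (Pi.single ρ 1) σ ≠ 0) :
    σ ⊆ ρ ∧ σ.card + L.length = ρ.card ∧ ∀ B ∈ L, ¬ B ⊆ σ := by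
  induction L generalizing σ with
  | nil =>
    obtain rfl : σ = ρ := by by_contra hσ; simp [iterBoundary, hσ] at h
    simp
  | cons C L ih =>
    obtain ⟨u, huC, huσ, hu⟩ := exists_of_partialBoundary_apply_ne_zero K h
    obtain ⟨hsub, hcard, hL⟩ := ih hu
    refine ⟨(subset_insert u σ).trans hsub, ?_, ?_⟩
    · rw [card_insert_of_notMem huσ] at hcard
      simp only [List.length_cons]; omega
    · intro B hB hBσ
      rcases List.mem_cons.1 hB with rfl | hB
      · exact huσ (hBσ huC)
      · exact hL B hB (hBσ.trans (subset_insert u σ))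

lemma exists_iterBoundary_single_ne_zero {L : List (Finset V)} {ρ : Finset V}
    (hL : L.Pairwise Disjoint) (hne : ∀ B ∈ L, B.Nonempty) (hρ : ∀ B ∈ L, B ⊆ ρ) :
    ∃ σ, iterBoundary K L (Pi.single ρ 1) σ ≠ 0 := by
  suffices h : ∃ W : Finset V, (∀ w ∈ W, ∃ B ∈ L, w ∈ B) ∧
      iterBoundary K L (Pi.single ρ 1) (ρ \ W) ≠ 0 from
    let ⟨W, _, hW⟩ := h; ⟨ρ \ W, hW⟩
  induction L with
  | nil => exact ⟨∅, by simp, by simp [iterBoundary]⟩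
  | cons C L ih =>
    rw [List.pairwise_cons] at hL
    obtain ⟨W, hWL, hW⟩ := ih hL.2 (fun B hB => hne B (List.mem_cons_of_mem C hB))
      (fun B hB => hρ B (List.mem_cons_of_mem C hB))
    obtain ⟨w, hwC⟩ := hne C List.mem_cons_self
    have hCW : ∀ u ∈ C, u ∉ W := fun u hu huW => by
      obtain ⟨B, hB, huB⟩ := hWL u huW
      exact disjoint_left.1 (hL.1 B hB) hu huB
    have hwρ : w ∈ ρ := hρ C List.mem_cons_self hwC
    refine ⟨insert w W, fun x hx => ?_, ?_⟩
    · rcases mem_insert.1 hx with rfl | hx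
      · exact ⟨C, List.mem_cons_self, hwC⟩
      · obtain ⟨B, hB, hxB⟩ := hWL x hx
        exact ⟨B, List.mem_cons_of_mem C hB, hxB⟩
    have hCρ : C \ (ρ \ insert w W) = {w} := by
      ext u
      have huW := hCW u
      have huρ := @hρ C List.mem_cons_self u
      by_cases hu : u = w <;> simp_all
    rw [iterBoundary, LinearMap.comp_apply, partialBoundary_apply, hCρ, sum_singleton]
    have hins : insert w (ρ \ insert w W) = ρ \ W := by
      have hwW := hCW w hwC
      ext u; by_cases hu : u = w <;> simp_all
    rw [hins]
    exact mul_ne_zero (sgn_ne_zero K _ _) hW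

variable {K}

lemma extendChain_boundary (X : SComplex V) (k : ℕ) (c : Chains K X (k + 1)) :
    extendChain K X k (boundary K X k c)
      = partialBoundary K univ (extendChain K X (k + 1) c) := by
  funext τ
  rw [partialBoundary_univ_apply_eq_sum]
  by_cases hτ : τ ∈ X.cells k
  · rw [extendChain, dif_pos hτ]
    simp only [boundary, LinearMap.pi_apply, LinearMap.sum_apply, LinearMap.smul_apply,
      LinearMap.proj_apply, smul_eq_mul, sum_mul, ite_mul, zero_mul]
    have hzero : ∀ σ ∉ X.cells (k + 1), (∑ v ∈ σ,
        if σ.erase v = τ then sgn K σ v * extendChain K X (k + 1) c σ else 0) = 0 := by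
      intro σ hσ
      simp [extendChain, hσ]
    rw [← sum_subset (subset_univ _) fun σ _ hσ => hzero σ hσ,
      ← sum_coe_sort (X.cells (k + 1))]
    refine sum_congr rfl fun σ _ => sum_congr rfl fun v _ => ?_
    simp [extendChain, σ.2, sgn]
  · rw [extendChain, dif_neg hτ]
    refine (sum_eq_zero fun σ _ => sum_eq_zero fun v hv => ?_).symm
    split_ifs with he
    · by_contra hne
      obtain ⟨hσX, hσk⟩ :=
        mem_cells.1 (mem_cells_of_extendChain_ne_zero (right_ne_zero_of_mul hne))
      refine hτ (mem_cells.2 ⟨he ▸ X.down_closed hσX (erase_subset v σ), ?_⟩)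
      rw [← he, card_erase_of_mem hv, hσk, Nat.add_sub_cancel]
    · rfl

lemma redHomDim_eq_zero_of_forall_mem_range {X : SComplex V} {k : ℕ}
    (h : ∀ x ∈ cyclesSub K X k, x ∈ LinearMap.range (boundary K X k)) :
    redHomDim K X k = 0 := by
  have : Subsingleton (RedHomology K X k) := by
    rw [Submodule.Quotient.subsingleton_iff, Submodule.eq_top_iff']
    exact fun x => h x x.2
  exact Module.finrank_zero_of_subsingleton

lemma redHomDim_eq_zero_of_card_lt {X : SComplex V} {k : ℕ}
    (h : ∀ σ ∈ X.faces, σ.card < k) :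
    redHomDim K X k = 0 := by
  have := isEmpty_cells_of_card_lt h
  refine redHomDim_eq_zero_of_forall_mem_range fun x _ => ?_
  rw [Subsingleton.elim x 0]
  exact Submodule.zero_mem _

lemma partialBoundary_extendChain_of_mem_cyclesSub {X : SComplex V} {k : ℕ} {x : Chains K X k}
    (hx : x ∈ cyclesSub K X k) : partialBoundary K univ (extendChain K X k x) = 0 := by
  cases k with
  | zero =>
    funext τ
    refine sum_eq_zero fun u _ => ?_
    by_contra hne
    have := (mem_cells.1 (mem_cells_of_extendChain_ne_zero (right_ne_zero_of_mul hne))).2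
    simp at this
  | succ m =>
    rw [← extendChain_boundary, show boundary K X m x = 0 from hx, extendChain_zero]

lemma redHomDim_eq_zero_of_cone {X : SComplex V} (v : V)
    (hv : ∀ σ ∈ X.faces, insert v σ ∈ X.faces) (k : ℕ) : redHomDim K X k = 0 := by
  refine redHomDim_eq_zero_of_forall_mem_range fun x hx => ?_
  obtain ⟨y, hy⟩ : ∃ y, extendChain K X (k + 1) y = coneOp K v (extendChain K X k x) := by
    refine exists_extendChain_eq fun σ hσ => ?_
    rw [coneOp_apply] at hσ
    split_ifs at hσ with hvσ
    · obtain ⟨hface, hcard⟩ :=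
        mem_cells.1 (mem_cells_of_extendChain_ne_zero (right_ne_zero_of_mul hσ))
      refine mem_cells.2 ⟨insert_erase hvσ ▸ hv _ hface, ?_⟩
      rw [← hcard, card_erase_add_one hvσ]
    · exact absurd rfl hσ
  refine ⟨y, extendChain_injective X k ?_⟩
  have h := partialBoundary_coneOp_add K v (extendChain K X k x)
  rwa [partialBoundary_extendChain_of_mem_cyclesSub hx, map_zero, add_zero, ← hy,
    ← extendChain_boundary] at h

lemma redHomDim_ne_zero_of_cycle {X : SComplex V} {d : ℕ}
    (htop : ∀ σ ∈ X.faces, σ.card ≤ d + 1)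
    {c : Chains K X (d + 1)} (hc : boundary K X d c = 0) (hc0 : c ≠ 0) :
    redHomDim K X (d + 1) ≠ 0 := by
  have := isEmpty_cells_of_card_lt fun σ hσ => Nat.lt_succ_of_le (htop σ hσ)
  intro h
  have := Module.finrank_zero_iff.mp h
  have hmk := Subsingleton.elim (Submodule.Quotient.mk ⟨c, hc⟩ : RedHomology K X (d + 1)) 0
  rw [Submodule.Quotient.mk_eq_zero, Submodule.mem_comap] at hmk
  obtain ⟨b, hb⟩ := hmk
  rw [Subsingleton.elim b 0, map_zero] at hb
  exact hc0 hb.symm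

variable (K)

theorem redHomDim_ne_zero_of_join_bdSimplex {X : SComplex V} {L : List (Finset V)} {d : ℕ}
    (hL : L.Pairwise Disjoint) (hne : ∀ B ∈ L, B.Nonempty)
    (hcard : (L.foldr (· ∪ ·) ∅).card = d + 1 + L.length)
    (hfaces : ∀ σ ⊆ L.foldr (· ∪ ·) ∅, (∀ B ∈ L, ¬ B ⊆ σ) → σ ∈ X.faces)
    (htop : ∀ σ ∈ X.faces, σ.card ≤ d + 1) : redHomDim K X (d + 1) ≠ 0 := by
  set ρ := L.foldr (· ∪ ·) ∅
  set z := iterBoundary K L (Pi.single ρ 1)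
  obtain ⟨c, hc⟩ : ∃ c, extendChain K X (d + 1) c = z :=
    exists_extendChain_eq fun σ hσ => by
    obtain ⟨hsub, hσcard, hB⟩ := iterBoundary_single_support K hσ
    exact mem_cells.2 ⟨hfaces σ hsub hB, by omega⟩
  have hcycle : partialBoundary K univ z = 0 := by
    rw [partialBoundary_univ_of_support K fun σ hσ => (iterBoundary_single_support K hσ).1]
    exact partialBoundary_foldr_union_eq_zero K hL fun B hB =>
      LinearMap.congr_fun (partialBoundary_comp_iterBoundary K hL hB) _
  refine redHomDim_ne_zero_of_cycle htop (c := c) (extendChain_injective X d ?_) ?_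
  · rw [extendChain_boundary, hc, hcycle, extendChain_zero]
  · rintro rfl
    obtain ⟨σ, hσ⟩ : ∃ σ, z σ ≠ 0 := exists_iterBoundary_single_ne_zero K hL hne
      fun B hB v hv => mem_foldr_union.2 ⟨B, hB, hv⟩
    rw [← hc, extendChain_zero] at hσ
    exact hσ rfl

lemma isLeray_of_card_le {X : SComplex V} {d : ℕ} (h : ∀ σ ∈ X.faces, σ.card ≤ d) :
    IsLeray K d X := fun _ _ hi =>
  redHomDim_eq_zero_of_card_lt fun σ hσ =>
    Nat.lt_succ_of_le ((h σ (mem_induced.1 hσ).1).trans hi)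

lemma lerayNum_eq_of_isLeray {X : SComplex V} {d : ℕ} (hL : IsLeray K (d + 1) X) {S : Finset V}
    (hS : redHomDim K (X.induced S) (d + 1) ≠ 0) : lerayNum K X = d + 1 :=
  le_antisymm (Nat.sInf_le hL) (le_csInf ⟨_, hL⟩ fun _ he => by
    by_contra h
    exact hS (he S d (by omega)))

lemma lerayNum_eq_card_sub_one {X : SComplex V} {A : Finset V} (hA : 2 ≤ A.card)
    (hX : ∀ σ, σ ∈ X.faces ↔ ¬ A ⊆ σ) : lerayNum K X = A.card - 1 := by
  obtain ⟨d, hd⟩ : ∃ d, A.card = d + 2 := ⟨A.card - 2, by omega⟩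
  have hsmall : ∀ σ ⊆ A, ¬ A ⊆ σ → σ.card ≤ d + 1 := fun σ hσA hAσ => by
    have := card_lt_card (_root_.ssubset_iff_subset_ne.2 ⟨hσA, fun h => hAσ h.ge⟩)
    omega
  rw [hd]
  refine lerayNum_eq_of_isLeray K (S := A) (fun S i hi => ?_) ?_
  · by_cases hS : S ⊆ A
    · refine redHomDim_eq_zero_of_card_lt fun σ hσ => ?_
      obtain ⟨hσX, hσS⟩ := mem_induced.1 hσ
      have := hsmall σ (hσS.trans hS) ((hX σ).1 hσX)
      omega
    · obtain ⟨v, hvS, hvA⟩ := not_subset.1 hS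
      refine redHomDim_eq_zero_of_cone v (fun σ hσ => ?_) _
      obtain ⟨hσX, hσS⟩ := mem_induced.1 hσ
      refine mem_induced.2 ⟨(hX _).2 fun hA => (hX σ).1 hσX fun w hw => ?_,
        insert_subset hvS hσS⟩
      exact (mem_insert.1 (hA hw)).resolve_left (ne_of_mem_of_not_mem hw hvA)
  · refine redHomDim_ne_zero_of_join_bdSimplex K (L := [A]) (List.pairwise_singleton _ _)
      (by simpa using card_pos.1 (by omega)) (by simpa using hd) (fun σ hσ hAσ => ?_)
      fun σ hσ => ?_
    · simp only [List.foldr_cons, List.foldr_nil, union_empty] at hσ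
      exact mem_induced.2 ⟨(hX σ).2 (hAσ A List.mem_cons_self), hσ⟩
    · obtain ⟨hσX, hσA⟩ := mem_induced.1 hσ
      exact hsmall σ hσA ((hX σ).1 hσX)

lemma lerayNum_joinFam_bdSimplex {r : ℕ} (hr : 0 < r) (Vs : Fin r → Finset V)
    (hdisj : ∀ i j, i ≠ j → Disjoint (Vs i) (Vs j))
    (hcover : univ.biUnion Vs = univ) (hVs : ∀ i, 2 ≤ (Vs i).card) :
    lerayNum K (joinFam Vs fun i => bdSimplex (Vs i)) = (∑ i, (Vs i).card) - r := by
  have hfaces : ∀ σ,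
      σ ∈ (joinFam Vs fun i => bdSimplex (Vs i)).faces ↔ ∀ i, ¬ Vs i ⊆ σ :=
    fun σ => by simp only [mem_joinFam, inter_mem_bdSimplex]
  have htop : ∀ σ ∈ (joinFam Vs fun i => bdSimplex (Vs i)).faces,
      σ.card + r ≤ ∑ i, (Vs i).card := fun σ hσ => by
    have hlt : ∀ i, (σ ∩ Vs i).card + 1 ≤ (Vs i).card := fun i =>
      card_lt_card (_root_.ssubset_iff_subset_ne.2 ⟨inter_subset_right,
        fun h => (hfaces σ).1 hσ i (inter_eq_right.1 h)⟩)
    have := sum_le_sum fun i (_ : i ∈ univ) => hlt i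
    rw [sum_add_distrib, ← card_eq_sum_card_inter hdisj hcover] at this
    simpa using this
  have hr2 : 2 * r ≤ ∑ i, (Vs i).card := by
    simpa [mul_comm] using sum_le_sum fun i (_ : i ∈ univ) => hVs i
  obtain ⟨d, hd⟩ : ∃ d, (∑ i, (Vs i).card) - r = d + 1 :=
    ⟨(∑ i, (Vs i).card) - r - 1, by omega⟩
  have hunion : (List.ofFn Vs).foldr (· ∪ ·) ∅ = univ := by
    ext v
    rw [mem_foldr_union, ← hcover]
    simp
  rw [hd]
  refine lerayNum_eq_of_isLeray K (S := univ)
    (isLeray_of_card_le K fun σ hσ => by have := htop σ hσ; omega) ?_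
  refine redHomDim_ne_zero_of_join_bdSimplex K (L := List.ofFn Vs)
    (List.pairwise_ofFn.2 fun i j hij => hdisj i j hij.ne) ?_ ?_ (fun σ _ hσ => ?_)
    fun σ hσ => ?_
  · simpa using fun i => card_pos.1 (by have := hVs i; omega)
  · rw [hunion, List.length_ofFn, card_eq_sum_card_inter hdisj hcover]
    simp only [univ_inter]
    omega
  · exact mem_induced.2 ⟨(hfaces σ).2 fun i => hσ (Vs i) (List.mem_ofFn.2 ⟨i, rfl⟩),
      subset_univ σ⟩
  · have := htop σ (mem_induced.1 hσ).1
    omega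

end SComplex

open SComplex in
/-- **Example (sharpness).** Let `V_1, …, V_r` be disjoint sets with
`|V_i| = a_i ≥ 2` partitioning the vertex set `V`, and let
`X_i = Δ(V_1) * ⋯ * ∂Δ(V_i) * ⋯ * Δ(V_r)`.  Then `L_K(X_i) = a_i - 1`;
`∩_{i=1}^r X_i = ∂Δ(V_1) * ⋯ * ∂Δ(V_r)` with `L_K(∩ X_i) = ∑ a_i - r`; and
`∪_{i=1}^r X_i = ∂Δ(V)` with `L_K(∪ X_i) = ∑ a_i - 1`.  In particular equality
holds in both inequalities `L_K(∩ X_i) ≤ ∑ L_K(X_i)` and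
`L_K(∪ X_i) ≤ ∑ L_K(X_i) + r - 1`. -/
theorem leray_join_example {V : Type} [DecidableEq V] [Fintype V]
    (K : Type) [Field K] {r : ℕ} (hr : 0 < r)
    (Vs : Fin r → Finset V) (a : Fin r → ℕ)
    (hdisj : ∀ i j, i ≠ j → Disjoint (Vs i) (Vs j))
    (hcover : Finset.univ.biUnion Vs = (Finset.univ : Finset V))
    (hcard : ∀ i, (Vs i).card = a i) (ha : ∀ i, 2 ≤ a i)
    (X : Fin r → SComplex V)
    (hX : ∀ i, X i = joinFam Vs (fun j => if j = i then bdSimplex (Vs j) else simplexOn (Vs j))) :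
    (∀ i, lerayNum K (X i) = a i - 1) ∧
    interFam X = joinFam Vs (fun i => bdSimplex (Vs i)) ∧
    lerayNum K (interFam X) = (∑ i, a i) - r ∧
    unionFam X = bdSimplex (Finset.univ : Finset V) ∧
    lerayNum K (unionFam X) = (∑ i, a i) - 1 := by
  have hXfaces : ∀ i σ, σ ∈ (X i).faces ↔ ¬ Vs i ⊆ σ := fun i _ =>
    hX i ▸ mem_joinFam_ite_bdSimplex i
  have hinter : interFam X = joinFam Vs fun i => bdSimplex (Vs i) := by
    ext σ
    simp only [mem_interFam, mem_joinFam, hXfaces, inter_mem_bdSimplex]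
  have hunion_faces : ∀ σ, σ ∈ (unionFam X).faces ↔ ¬ univ ⊆ σ := fun σ => by
    rw [mem_unionFam, ← hcover, biUnion_subset]
    simp [hXfaces]
  have hunion : unionFam X = bdSimplex univ := by
    ext σ
    rw [hunion_faces, mem_bdSimplex, univ_subset_iff]
    exact ⟨fun h => ⟨subset_univ σ, h⟩, And.right⟩
  have hcardV : (univ : Finset V).card = ∑ i, a i := by
    rw [card_eq_sum_card_inter hdisj hcover]
    simp [hcard]
  have hV : 2 ≤ (univ : Finset V).card :=
    hcardV ▸ (ha ⟨0, hr⟩).trans (single_le_sum (by simp) (mem_univ _))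
  refine ⟨fun i => ?_, hinter, ?_, hunion, ?_⟩
  · rw [← hcard i]
    exact lerayNum_eq_card_sub_one K (hcard i ▸ ha i) (hXfaces i)
  · rw [hinter, lerayNum_joinFam_bdSimplex K hr Vs hdisj hcover fun i => hcard i ▸ ha i]
    simp [hcard]
  · rw [lerayNum_eq_card_sub_one K hV hunion_faces, hcardV]
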